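/- For all natural numbers a, b, d, m, p, we have ∑_{k=0}^{a} C(a,k)·C(b,m+k)·C(p−k, a+b−d)·C(m+k,d) = C(m+p−b, m+a−d)·C(p−a, b−m)·C(b,d). -/

import Mathlib

/-- Binomial coefficient for integers: `C x y` is the usual binomial coefficient
when `0 ≤ y ≤ x`, and `0` otherwise. -/
def C (x y : ℤ) : ℤ := if 0 ≤ y ∧ y ≤ x then (x.toNat.choose y.toNat : ℤ) else 0

/-!
Trinomial revision `C(b,m+k) C(m+k,d) = C(b,d) C(b-d,m+k-d)` pulls out the factor `C(b,d)`.
With `B = b - d`, `e = m - d` and `p = P + a`, expand `C(p-k, a+B)` by Vandermonde as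
`∑ⱼ C(P,j) C(a-k, a+B-j)`. For fixed `j`, trinomial revision and Vandermonde collapse the sum
over `k` to `C(a, a+B-j) C(j, B-e)`; one more trinomial revision and Vandermonde in `j` give
`C(P+a+e-B, a+e) C(P, B-e)`.
-/

open Finset

lemma C_eq_zero {x y : ℤ} (h : ¬(0 ≤ y ∧ y ≤ x)) : C x y = 0 := if_neg h

lemma C_eq_zero_of_neg {x y : ℤ} (h : y < 0) : C x y = 0 := C_eq_zero (by omega)

lemma C_eq_zero_of_lt {x y : ℤ} (h : x < y) : C x y = 0 := C_eq_zero (by omega)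

lemma C_natCast (x y : ℕ) : C x y = x.choose y := by
  by_cases h : y ≤ x
  · simp [C, h]
  · rw [C_eq_zero_of_lt (by omega), Nat.choose_eq_zero_of_lt (by omega), Nat.cast_zero]

lemma C_mul_C (x y z : ℤ) : C x y * C y z = C x z * C (x - z) (y - z) := by
  rcases lt_or_ge z 0 with hz | hz
  · simp [C_eq_zero_of_neg hz]
  rcases lt_or_ge y z with hyz | hyz
  · simp [C_eq_zero_of_lt hyz, C_eq_zero_of_neg (x := x - z) (by omega : y - z < 0)]
  rcases lt_or_ge x y with hxy | hxy
  · simp [C_eq_zero_of_lt hxy, C_eq_zero_of_lt (by omega : x - z < y - z)]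
  lift z to ℕ using hz
  lift y to ℕ using (by omega)
  lift x to ℕ using (by omega)
  rw [← Nat.cast_sub (by omega), ← Nat.cast_sub (by omega)]
  simp only [C_natCast]
  exact_mod_cast Nat.choose_mul (by omega)

lemma C_symm (x y : ℤ) : C x y = C x (x - y) := by
  by_cases h : 0 ≤ y ∧ y ≤ x
  · lift y to ℕ using h.1
    lift x to ℕ using (by omega)
    rw [← Nat.cast_sub (by omega), C_natCast, C_natCast, Nat.choose_symm (by omega)]
  · rw [C_eq_zero h, C_eq_zero (by omega)]

lemma C_mul_C_sub (x k t : ℤ) : C x k * C (x - k) t = C x t * C (x - t) k := by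
  have hk := C_mul_C x (k + t) k
  have ht := C_mul_C x (k + t) t
  rw [add_sub_cancel_left] at hk
  rw [add_sub_cancel_right] at ht
  rw [← hk, ← ht, C_symm (k + t) k, add_sub_cancel_left]

lemma sum_range_C_mul_C (X Y N : ℕ) (n : ℤ) (hN : X < N) :
    ∑ j ∈ range N, C X j * C Y (n - j) = C (X + Y) n := by
  rcases lt_or_ge n 0 with hn | hn
  · rw [C_eq_zero_of_neg hn,
      sum_eq_zero fun j _ => by rw [C_eq_zero_of_neg (x := Y) (by omega), mul_zero]]
  lift n to ℕ using hn
  have hX : ∀ j ≥ N, C X j * C Y (n - j) = 0 := fun j hj => by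
    rw [C_eq_zero_of_lt (by omega), zero_mul]
  have hn : ∀ j ≥ n + 1, C X j * C Y (n - j) = 0 := fun j hj => by
    rw [C_eq_zero_of_neg (x := Y) (by omega), mul_zero]
  rw [← eventually_constant_sum hX (Nat.le_add_right N (n + 1)),
    add_comm N, eventually_constant_sum hn (Nat.le_add_right _ N), ← Nat.cast_add,
    C_natCast, Nat.add_choose_eq,
    Nat.sum_antidiagonal_eq_sum_range_succ (fun i j => X.choose i * Y.choose j) n, Nat.cast_sum]
  refine sum_congr rfl fun j hj => ?_
  rw [← Nat.cast_sub (Nat.le_of_lt_succ (mem_range.mp hj)), C_natCast, C_natCast, Nat.cast_mul]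

lemma sum_range_C_sub_mul_C (X Y s N : ℕ) (n : ℤ) (hN : s + X < N) :
    ∑ j ∈ range N, C X (j - s) * C Y (n - j) = C (X + Y) (n - s) := by
  obtain ⟨M, rfl⟩ := Nat.exists_eq_add_of_le (by omega : s ≤ N)
  have hlow : ∀ j ∈ range s, C X (j - s) * C Y (n - j) = 0 := fun j hj => by
    rw [C_eq_zero_of_neg (sub_neg.mpr (mod_cast mem_range.mp hj)), zero_mul]
  rw [sum_range_add, sum_eq_zero hlow, zero_add, ← sum_range_C_mul_C X Y M (n - s) (by omega)]
  refine sum_congr rfl fun j _ => ?_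
  push_cast
  ring_nf

lemma sum_range_C_mul_C_add (X Y N : ℕ) (n : ℤ) (hN : X < N) :
    ∑ k ∈ range N, C X k * C Y (n + k) = C (X + Y) (X + n) := by
  simp_rw [C_symm (Y : ℤ) (n + _), sub_add_eq_sub_sub]
  rw [sum_range_C_mul_C X Y N _ hN, C_symm]
  ring_nf

lemma sum_range_C_mul_C_mul_C (P Y N : ℕ) (s n : ℤ) (hN : P < N) :
    ∑ j ∈ range N, C P j * C j s * C Y (n - j) = C P s * C (P - s + Y) (n - s) := by
  simp_rw [C_mul_C, mul_assoc, ← mul_sum]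
  by_cases hs : 0 ≤ s ∧ s ≤ P
  · lift s to ℕ using hs.1
    rw [← Nat.cast_sub (by omega), sum_range_C_sub_mul_C _ _ _ _ _ (by omega)]
  · rw [C_eq_zero hs, zero_mul, zero_mul]

lemma sum_range_C_mul_C_sub_mul_C (a B : ℕ) (t e : ℤ) :
    ∑ k ∈ range (a + 1), C a k * C (a - k) t * C B (e + k) =
      C a t * C (a - t + B) (a - t + e) := by
  simp_rw [C_mul_C_sub, mul_assoc, ← mul_sum]
  by_cases ht : 0 ≤ t ∧ t ≤ a
  · lift t to ℕ using ht.1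
    rw [← Nat.cast_sub (by omega), sum_range_C_mul_C_add _ _ _ _ (by omega)]
  · rw [C_eq_zero ht, zero_mul, zero_mul]

lemma sum_range_C_mul_C_add_mul_C_add_sub (a B P : ℕ) (e : ℤ) :
    ∑ k ∈ range (a + 1), C a k * C B (e + k) * C (P + a - k) (a + B) =
      C (P + a + e - B) (a + e) * C P (B - e) := by
  have hVandermonde : ∀ k ∈ range (a + 1), C (P + a - k) (a + B) =
      ∑ j ∈ range (P + 1), C P j * C (a - k) (a + B - j) := fun k hk => by
    have hka : k ≤ a := Nat.le_of_lt_succ (mem_range.mp hk)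
    rw [← Nat.cast_sub hka, sum_range_C_mul_C P (a - k) _ _ (by omega), Nat.cast_sub hka]
    ring_nf
  calc _ = ∑ k ∈ range (a + 1), ∑ j ∈ range (P + 1),
        C a k * C B (e + k) * (C P j * C (a - k) (a + B - j)) :=
        sum_congr rfl fun k hk => by rw [hVandermonde k hk, mul_sum]
    _ = ∑ j ∈ range (P + 1), C P j *
        ∑ k ∈ range (a + 1), C a k * C (a - k) (a + B - j) * C B (e + k) := by
        rw [sum_comm]
        simp_rw [mul_sum]
        exact sum_congr rfl fun j _ => sum_congr rfl fun k _ => by ring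
    _ = ∑ j ∈ range (P + 1), C P j * C j (B - e) * C a (a + B - j) := by
        refine sum_congr rfl fun j _ => ?_
        rw [sum_range_C_mul_C_sub_mul_C, C_symm (a - (a + B - j) + B)]
        ring_nf
    _ = C (P + a + e - B) (a + e) * C P (B - e) := by
        rw [sum_range_C_mul_C_mul_C _ _ _ _ _ (by omega), mul_comm]
        congr 2 <;> ring

theorem stmt_13 (a b d m p : ℕ) :
    ∑ k ∈ Finset.range (a + 1), C a k * C b ((m : ℤ) + k) * C ((p : ℤ) - k) ((a : ℤ) + b - d) * C ((m : ℤ) + k) d = C ((m : ℤ) + p - b) ((m : ℤ) + a - d) * C ((p : ℤ) - a) ((b : ℤ) - m) * C b d := by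
  trans C b d * ∑ k ∈ range (a + 1),
    C a k * C ((b : ℤ) - d) ((m : ℤ) - d + k) * C ((p : ℤ) - k) ((a : ℤ) + b - d)
  · rw [mul_sum]
    refine sum_congr rfl fun k _ => ?_
    rw [mul_right_comm, mul_assoc _ (C b _), C_mul_C, add_sub_right_comm]
    ring
  rcases lt_or_ge b d with hbd | hdb
  · rw [C_eq_zero_of_lt (by omega : (b : ℤ) < d), zero_mul, mul_zero]
  obtain ⟨B, rfl⟩ := Nat.exists_eq_add_of_le hdb
  rcases lt_or_ge p a with hpa | hap
  · rw [sum_eq_zero fun k hk => by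
      simp only [mem_range] at hk
      rw [C_eq_zero_of_lt (x := (p : ℤ) - k) (by push_cast; omega), mul_zero]]
    rw [C_eq_zero (x := (p : ℤ) - a) (by omega)]
    ring
  obtain ⟨P, rfl⟩ := Nat.exists_eq_add_of_le' hap
  push_cast
  rw [show (d : ℤ) + B - d = B by ring, show (a : ℤ) + (d + B) - d = a + B by ring,
    show (P : ℤ) + a - a = P by ring, sum_range_C_mul_C_add_mul_C_add_sub]
  rw [mul_comm (C _ d)]
  congr 3 <;> ring
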